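/- Let μ, μ' ∈ ℝ with μ' < μ, σ > 0, σ' > 0, and let X be a random variable with distribution N(μ', σ'²). Then E[1 − Φ((X − μ)/σ)] > 1/2. -/

import Mathlib

open MeasureTheory ProbabilityTheory

/-- The standard normal cumulative distribution function Φ. -/
noncomputable def stdGaussianCDF (t : ℝ) : ℝ :=
  (gaussianReal 0 1 (Set.Iic t)).toReal

lemma stdGaussianCDF_nonneg (t : ℝ) : 0 ≤ stdGaussianCDF t := ENNReal.toReal_nonneg

lemma stdGaussianCDF_le_one (t : ℝ) : stdGaussianCDF t ≤ 1 := by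
  have h : gaussianReal 0 1 (Set.Iic t) ≤ 1 := prob_le_one
  have := ENNReal.toReal_mono ENNReal.one_ne_top h
  simpa [stdGaussianCDF] using this

lemma stdGaussianCDF_mono : Monotone stdGaussianCDF := fun s t hst =>
  ENNReal.toReal_mono (measure_ne_top _ _) (measure_mono (Set.Iic_subset_Iic.mpr hst))

lemma stdGaussianCDF_strictMono : StrictMono stdGaussianCDF := by
  intro s t hst
  have h0 : gaussianReal 0 1 (Set.Ioc s t) ≠ 0 := by
    intro h
    have hv := (gaussianReal_absolutelyContinuous' 0 one_ne_zero) h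
    rw [Real.volume_Ioc] at hv
    rw [ENNReal.ofReal_eq_zero] at hv
    linarith [sub_pos.mpr hst]
  have hunion : Set.Iic s ∪ Set.Ioc s t = Set.Iic t := Set.Iic_union_Ioc_eq_Iic hst.le
  have hadd : gaussianReal 0 1 (Set.Iic t)
      = gaussianReal 0 1 (Set.Iic s) + gaussianReal 0 1 (Set.Ioc s t) := by
    rw [← hunion, measure_union (Set.Iic_disjoint_Ioc le_rfl) measurableSet_Ioc]
  have hlt : gaussianReal 0 1 (Set.Iic s) < gaussianReal 0 1 (Set.Iic t) := by
    rw [hadd]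
    exact ENNReal.lt_add_right (measure_ne_top _ _) h0
  exact (ENNReal.toReal_lt_toReal (measure_ne_top _ _) (measure_ne_top _ _)).mpr hlt

lemma gaussianReal_std_map_neg : (gaussianReal 0 1).map (fun x => -x) = gaussianReal 0 1 := by
  have h := gaussianReal_map_const_mul (μ := 0) (v := 1) (-1)
  have heq : (fun x : ℝ => -1 * x) = fun x => -x := by funext x; ring
  rw [heq] at h
  have hv : (⟨(-1 : ℝ) ^ 2, sq_nonneg _⟩ : NNReal) = 1 := by ext; norm_num
  rw [h]
  congr 1
  · ring
  · ext; simp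

lemma stdGaussianCDF_neg (t : ℝ) : stdGaussianCDF (-t) = 1 - stdGaussianCDF t := by
  have hmap : gaussianReal 0 1 (Set.Iic (-t)) = gaussianReal 0 1 (Set.Ici t) := by
    conv_lhs => rw [← gaussianReal_std_map_neg]
    rw [Measure.map_apply measurable_neg measurableSet_Iic]
    congr 1
    ext x
    simp only [Set.mem_preimage, Set.mem_Iic, Set.mem_Ici, neg_le_neg_iff]
  have hsing : gaussianReal 0 1 ({t} : Set ℝ) = 0 :=
    (gaussianReal_absolutelyContinuous 0 one_ne_zero) (measure_singleton t)
  have hset : Set.Ici t \ {t} = Set.Ioi t := by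
    ext x
    simp only [Set.mem_diff, Set.mem_Ici, Set.mem_singleton_iff, Set.mem_Ioi]
    constructor
    · rintro ⟨h1, h2⟩; exact lt_of_le_of_ne h1 (Ne.symm h2)
    · intro h; exact ⟨h.le, h.ne'⟩
  have hIci : gaussianReal 0 1 (Set.Ici t) = gaussianReal 0 1 (Set.Ioi t) := by
    rw [← hset, measure_diff_null hsing]
  have hcompl : gaussianReal 0 1 (Set.Ioi t) = 1 - gaussianReal 0 1 (Set.Iic t) := by
    rw [← Set.compl_Iic, measure_compl measurableSet_Iic (measure_ne_top _ _), measure_univ]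
  unfold stdGaussianCDF
  rw [hmap, hIci, hcompl, ENNReal.toReal_sub_of_le prob_le_one ENNReal.one_ne_top,
    ENNReal.toReal_one]

/-- When the sensitivity analysis is performed at a `Γ` strictly larger than the
true bias, so that `μ' < μ`, the expected P-value bound for a true null
hypothesis exceeds `1/2`: if `X ~ N(μ', σ'²)` then `E[1 - Φ((X - μ)/σ)] > 1/2`. -/
theorem expected_pvalue_gt_half
    {Ω : Type*} [MeasurableSpace Ω] (P : Measure Ω) [IsProbabilityMeasure P]
    (μ μ' σ σ' : ℝ) (hμ : μ' < μ) (hσ : 0 < σ) (hσ' : 0 < σ')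
    (X : Ω → ℝ) (hX : Measurable X)
    (hXd : P.map X = gaussianReal μ' (Real.toNNReal (σ' ^ 2))) :
    1 / 2 < ∫ ω, (1 - stdGaussianCDF ((X ω - μ) / σ)) ∂P := by
  set V : NNReal := Real.toNNReal (σ' ^ 2) with hV
  set ν : Measure ℝ := gaussianReal μ' V with hν
  have hνprob : IsProbabilityMeasure ν := by rw [hν]; infer_instance
  -- measurability and integrability of CDF compositions
  have hmeas : ∀ c : ℝ, Measurable (fun x : ℝ => stdGaussianCDF ((x - c) / σ)) := fun c =>
    stdGaussianCDF_mono.measurable.comp ((measurable_id.sub_const c).div_const σ)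
  have hint : ∀ c : ℝ, Integrable (fun x : ℝ => stdGaussianCDF ((x - c) / σ)) ν := by
    intro c
    refine (integrable_const (1 : ℝ)).mono' (hmeas c).aestronglyMeasurable ?_
    filter_upwards with x
    rw [Real.norm_eq_abs, abs_of_nonneg (stdGaussianCDF_nonneg _)]
    exact stdGaussianCDF_le_one _
  -- reflection symmetry of ν about μ'
  have hrefl : ν.map (fun x => 2 * μ' - x) = ν := by
    have h1 : ν.map (fun x : ℝ => -1 * x) = gaussianReal (-μ') V := by
      rw [hν, gaussianReal_map_const_mul]
      have hv : (⟨(-1 : ℝ) ^ 2, sq_nonneg _⟩ : NNReal) = 1 := by ext; norm_num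
      congr 1
      · ring
      · ext; simp
    have hcomp : (fun x : ℝ => 2 * μ' - x) = (fun y => y + 2 * μ') ∘ fun x : ℝ => -1 * x := by
      funext x; simp; ring
    rw [hcomp, ← Measure.map_map (measurable_add_const _) (measurable_const_mul _), h1,
      gaussianReal_map_add_const]
    rw [hν]
    congr 1
    ring
  -- expectation at the true mean equals 1/2
  have hI : ∫ x, stdGaussianCDF ((x - μ') / σ) ∂ν = 1 / 2 := by
    have h1 : ∫ x, stdGaussianCDF ((x - μ') / σ) ∂ν
        = ∫ x, stdGaussianCDF ((2 * μ' - x - μ') / σ) ∂ν := by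
      conv_lhs => rw [← hrefl]
      rw [integral_map (by fun_prop) (hmeas μ').aestronglyMeasurable]
    have h2 : ∀ x : ℝ, stdGaussianCDF ((2 * μ' - x - μ') / σ)
        = 1 - stdGaussianCDF ((x - μ') / σ) := by
      intro x
      have hx : (2 * μ' - x - μ') / σ = -((x - μ') / σ) := by ring
      rw [hx, stdGaussianCDF_neg]
    have h3 : ∫ x, (1 - stdGaussianCDF ((x - μ') / σ)) ∂ν
        = 1 - ∫ x, stdGaussianCDF ((x - μ') / σ) ∂ν := by
      rw [integral_sub (integrable_const _) (hint μ'), integral_const, probReal_univ,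
        one_smul]
    have h4 : ∫ x, stdGaussianCDF ((x - μ') / σ) ∂ν
        = 1 - ∫ x, stdGaussianCDF ((x - μ') / σ) ∂ν := by
      conv_lhs => rw [h1]
      simp_rw [h2]
      exact h3
    linarith
  -- strict comparison
  have hlt : ∫ x, stdGaussianCDF ((x - μ) / σ) ∂ν < ∫ x, stdGaussianCDF ((x - μ') / σ) ∂ν := by
    have hposfn : ∀ x : ℝ, 0 < stdGaussianCDF ((x - μ') / σ) - stdGaussianCDF ((x - μ) / σ) := by
      intro x
      have : (x - μ) / σ < (x - μ') / σ := by
        gcongr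
        all_goals linarith
      linarith [stdGaussianCDF_strictMono this]
    have hdiff : Integrable
        (fun x => stdGaussianCDF ((x - μ') / σ) - stdGaussianCDF ((x - μ) / σ)) ν :=
      (hint μ').sub (hint μ)
    have hpos : 0 < ∫ x, (stdGaussianCDF ((x - μ') / σ) - stdGaussianCDF ((x - μ) / σ)) ∂ν := by
      rw [integral_pos_iff_support_of_nonneg (fun x => (hposfn x).le) hdiff]
      have : Function.support
          (fun x => stdGaussianCDF ((x - μ') / σ) - stdGaussianCDF ((x - μ) / σ)) = Set.univ := by
        ext x; simp [Function.mem_support, (hposfn x).ne']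
      rw [this, measure_univ]
      norm_num
    rw [integral_sub (hint μ') (hint μ)] at hpos
    linarith
  -- transfer to P and conclude
  have htrans : ∫ ω, (1 - stdGaussianCDF ((X ω - μ) / σ)) ∂P
      = ∫ x, (1 - stdGaussianCDF ((x - μ) / σ)) ∂ν := by
    rw [← hXd, integral_map hX.aemeasurable
      (((hmeas μ).const_sub 1).aestronglyMeasurable)]
  rw [htrans, integral_sub (integrable_const _) (hint μ), integral_const, probReal_univ,
    one_smul]
  linarith
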